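/- Let A be a 2×2 integer matrix with det A = 1 and tr A > 2 (an Anosov matrix), and let B be an element of GL(2,ℤ) that either has finite order or has 1 or −1 as an eigenvalue (i.e. det(B − I) = 0 or det(B + I) = 0). Then for all nonzero integers k₁, k₂, the matrices A^{k₁} and B^{k₂} are not conjugate by any invertible 2×2 rational matrix. -/

import Mathlib

/-!
Traces of powers are conjugation invariants. If `det M = 1`, Cayley–Hamilton gives
`tr M^(n+2) = tr M · tr M^(n+1) - tr M^n`, so `tr M > 2` forces `tr M^k > 2` for every
`k ≠ 0`, while `tr M = 2` forces `tr M^k = 2` for all `k`. A periodic `B` has a power equal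
to `1`, and a reducible `B` has `B²` of determinant `1` and trace `2`. Raising a conjugacy
`A^{k₁} ~ B^{k₂}` to such a power then equates a trace `> 2` with a trace `= 2`.
-/

open Matrix

namespace Matrix

variable {R : Type*}

section CommRing

variable [CommRing R]

theorem sq_fin_two (M : Matrix (Fin 2) (Fin 2) R) : M ^ 2 = M.trace • M - M.det • 1 := by
  ext i j
  fin_cases i <;> fin_cases j <;>
    simp [sq, mul_apply, Fin.sum_univ_two, trace_fin_two, det_fin_two] <;> ring

theorem trace_sq_fin_two (M : Matrix (Fin 2) (Fin 2) R) :
    (M ^ 2).trace = M.trace ^ 2 - 2 * M.det := by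
  rw [sq_fin_two, trace_sub, trace_smul, trace_smul, trace_one, Fintype.card_fin, smul_eq_mul,
    smul_eq_mul]
  ring

theorem trace_pow_add_two_fin_two {M : Matrix (Fin 2) (Fin 2) R} (hM : M.det = 1) (n : ℕ) :
    (M ^ (n + 2)).trace = M.trace * (M ^ (n + 1)).trace - (M ^ n).trace := by
  rw [pow_add, sq_fin_two, hM, one_smul, mul_sub, mul_one, mul_smul_comm, ← pow_succ, trace_sub,
    trace_smul, smul_eq_mul]

theorem det_sub_one_fin_two (M : Matrix (Fin 2) (Fin 2) R) :
    (M - 1).det = M.det - M.trace + 1 := by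
  simp only [det_fin_two, trace_fin_two, sub_apply, one_apply_eq, ne_eq, zero_ne_one,
    one_ne_zero, not_false_eq_true, one_apply_ne, sub_zero]
  ring

theorem det_add_one_fin_two (M : Matrix (Fin 2) (Fin 2) R) :
    (M + 1).det = M.det + M.trace + 1 := by
  simp only [det_fin_two, trace_fin_two, add_apply, one_apply_eq, ne_eq, zero_ne_one,
    one_ne_zero, not_false_eq_true, one_apply_ne, add_zero]
  ring

theorem trace_sq_eq_two_of_eigenvalue_one_or_neg_one {M : Matrix (Fin 2) (Fin 2) R}
    (hdet : M.det ^ 2 = 1) (h : (M - 1).det = 0 ∨ (M + 1).det = 0) : (M ^ 2).trace = 2 := by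
  have htr : M.trace ^ 2 = (M.det + 1) ^ 2 := by
    rcases h with h | h
    · rw [det_sub_one_fin_two] at h
      rw [show M.trace = M.det + 1 by linear_combination -h]
    · rw [det_add_one_fin_two] at h
      rw [show M.trace = -(M.det + 1) by linear_combination h]
      ring
  rw [trace_sq_fin_two]
  linear_combination htr + hdet

theorem trace_adjugate_fin_two (M : Matrix (Fin 2) (Fin 2) R) : M.adjugate.trace = M.trace := by
  simp [adjugate_fin_two, trace_fin_two, add_comm]

theorem trace_zpow_fin_two_eq_trace_pow_natAbs {M : Matrix (Fin 2) (Fin 2) R} (hM : M.det = 1)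
    (k : ℤ) : (M ^ k).trace = (M ^ k.natAbs).trace := by
  rcases Int.natAbs_eq k with h | h <;> rw [h]
  · rw [zpow_natCast, Int.natAbs_natCast]
  · rw [zpow_neg_natCast, Int.natAbs_neg, Int.natAbs_natCast, inv_def, det_pow, hM, one_pow,
      Ring.inverse_one, one_smul, trace_adjugate_fin_two]

theorem trace_pow_fin_two_of_trace_eq_two {M : Matrix (Fin 2) (Fin 2) R} (hdet : M.det = 1)
    (htr : M.trace = 2) (n : ℕ) : (M ^ n).trace = 2 := by
  induction n using Nat.twoStepInduction with
  | zero => simp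
  | one => simpa using htr
  | more n ih₀ ih₁ => rw [trace_pow_add_two_fin_two hdet, htr, ih₀, ih₁]; ring

theorem trace_zpow_fin_two_of_trace_eq_two {M : Matrix (Fin 2) (Fin 2) R} (hdet : M.det = 1)
    (htr : M.trace = 2) (k : ℤ) : (M ^ k).trace = 2 := by
  rw [trace_zpow_fin_two_eq_trace_pow_natAbs hdet, trace_pow_fin_two_of_trace_eq_two hdet htr]

end CommRing

section Ordered

variable [CommRing R] [LinearOrder R] [IsStrictOrderedRing R]

theorem two_lt_trace_pow_fin_two {M : Matrix (Fin 2) (Fin 2) R} (hdet : M.det = 1)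
    (htr : 2 < M.trace) {n : ℕ} (hn : n ≠ 0) : 2 < (M ^ n).trace := by
  have hmono : ∀ m : ℕ, 2 < (M ^ (m + 1)).trace ∧ (M ^ m).trace < (M ^ (m + 1)).trace := by
    intro m
    induction m with
    | zero => exact ⟨by simpa using htr, by simpa using htr⟩
    | succ m ih =>
      -- `tr M^(m+2) - tr M^(m+1) = (tr M - 2) · tr M^(m+1) + (tr M^(m+1) - tr M^m)`
      rw [trace_pow_add_two_fin_two hdet]
      constructor <;> nlinarith [ih.1, ih.2]
  obtain ⟨m, rfl⟩ := Nat.exists_eq_succ_of_ne_zero hn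
  exact (hmono m).1

theorem two_lt_trace_zpow_fin_two {M : Matrix (Fin 2) (Fin 2) R} (hdet : M.det = 1)
    (htr : 2 < M.trace) {k : ℤ} (hk : k ≠ 0) : 2 < (M ^ k).trace := by
  rw [trace_zpow_fin_two_eq_trace_pow_natAbs hdet]
  exact two_lt_trace_pow_fin_two hdet htr (Int.natAbs_ne_zero.2 hk)

end Ordered

theorem trace_pow_eq_of_conj {n : Type*} [Fintype n] [DecidableEq n] [CommRing R]
    {P X Y : Matrix n n R} (hP : IsUnit P) (h : P * X * P⁻¹ = Y) (m : ℕ) :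
    (X ^ m).trace = (Y ^ m).trace := by
  rw [← h, ← hP.unit_spec, ← coe_units_inv, Units.conj_pow, trace_units_conj]

end Matrix

theorem Int.cast_trace {n R : Type*} [Fintype n] [Ring R] (M : Matrix n n ℤ) :
    (M.trace : R) = (M.map fun x ↦ (x : R)).trace :=
  AddMonoidHom.map_trace (Int.castAddHom R) M

theorem Matrix.GeneralLinearGroup.exists_pow_det_eq_one_and_trace_eq_two (B : GL (Fin 2) ℤ)
    (hB : IsOfFinOrder B ∨ ((B : Matrix (Fin 2) (Fin 2) ℤ) - 1).det = 0 ∨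
      ((B : Matrix (Fin 2) (Fin 2) ℤ) + 1).det = 0) :
    ∃ n : ℕ, n ≠ 0 ∧ ((B ^ n : GL (Fin 2) ℤ) : Matrix (Fin 2) (Fin 2) ℤ).det = 1 ∧
      ((B ^ n : GL (Fin 2) ℤ) : Matrix (Fin 2) (Fin 2) ℤ).trace = 2 := by
  rcases hB with hfin | hred
  · refine ⟨orderOf B, hfin.orderOf_pos.ne', ?_⟩
    simp [pow_orderOf_eq_one]
  · have hdet : (B : Matrix (Fin 2) (Fin 2) ℤ).det ^ 2 = 1 :=
      Int.isUnit_sq ((isUnit_iff_isUnit_det _).mp B.isUnit)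
    refine ⟨2, two_ne_zero, ?_, ?_⟩
    · rw [Units.val_pow_eq_pow_val, det_pow, hdet]
    · rw [Units.val_pow_eq_pow_val, trace_sq_eq_two_of_eigenvalue_one_or_neg_one hdet hred]

/-- An Anosov matrix `A` (integer matrix with determinant `1` and trace `> 2`) is
never commensurable with a periodic or reducible element `B` of `GL(2, ℤ)` (one of
finite order, or with eigenvalue `±1`): no nonzero powers `A^{k₁}` and `B^{k₂}` are
conjugate by an invertible rational matrix. -/
theorem anosov_not_commensurable_periodic_or_reducible
    (A : Matrix (Fin 2) (Fin 2) ℤ) (hdA : A.det = 1) (htA : 2 < A.trace)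
    (B : GL (Fin 2) ℤ)
    (hB : IsOfFinOrder B ∨
          Matrix.det ((B : Matrix (Fin 2) (Fin 2) ℤ) - 1) = 0 ∨
          Matrix.det ((B : Matrix (Fin 2) (Fin 2) ℤ) + 1) = 0) :
    ∀ k₁ k₂ : ℤ, k₁ ≠ 0 → k₂ ≠ 0 →
      ¬ ∃ P : Matrix (Fin 2) (Fin 2) ℚ, IsUnit P ∧
        P * (A.map (Int.cast : ℤ → ℚ)) ^ k₁ * P⁻¹ =
          ((B ^ k₂ : GL (Fin 2) ℤ) : Matrix (Fin 2) (Fin 2) ℤ).map (Int.cast : ℤ → ℚ) := by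
  rintro k₁ k₂ hk₁ - ⟨P, hP, hconj⟩
  obtain ⟨n, hn, hdetC, htrC⟩ := GeneralLinearGroup.exists_pow_det_eq_one_and_trace_eq_two B hB
  set M := A.map (Int.cast : ℤ → ℚ)
  have hdetM : M.det = 1 := by rw [← Int.cast_det, hdA, Int.cast_one]
  have htrM : 2 < M.trace := by rw [← Int.cast_trace]; exact_mod_cast htA
  have htr_eq : (M ^ (k₁ * n)).trace =
      (((B ^ n) ^ k₂ : GL (Fin 2) ℤ) : Matrix (Fin 2) (Fin 2) ℤ).trace := by
    have hcomm : (B ^ n) ^ k₂ = (B ^ k₂) ^ n := by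
      rw [← zpow_natCast, ← zpow_natCast, ← _root_.zpow_mul, ← _root_.zpow_mul, mul_comm]
    rw [Matrix.zpow_mul M (hdetM ▸ isUnit_one), zpow_natCast, trace_pow_eq_of_conj hP hconj,
      Int.cast_trace, hcomm, Units.val_pow_eq_pow_val]
    exact congrArg trace (Matrix.map_pow _ (Int.castRingHom ℚ) n).symm
  have hgt := two_lt_trace_zpow_fin_two hdetM htrM (mul_ne_zero hk₁ (Int.natCast_ne_zero.2 hn))
  rw [htr_eq, coe_units_zpow, trace_zpow_fin_two_of_trace_eq_two hdetC htrC] at hgt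
  exact lt_irrefl _ hgt
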